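/- arXiv:2106.08290 — 4 statements merged into one kernel-verified Lean document; each statement's English description precedes it below -/
import Mathlib

section
/- For integers s ≥ 1 and t ≥ 1, let θ' = t(2s-1). Then the sumset {i + t·j : 0 ≤ i ≤ t-1, 0 ≤ j ≤ s-1} + {t·q + θ'·l : 0 ≤ q ≤ s-1, 0 ≤ l ≤ t-1} equals the interval {0, 1, ..., t·θ' - 1}. -/
/-!
Both sets are described by mixed-radix expansions: every `0 ≤ n < t²(2s-1)` is
`i + t·m + t(2s-1)·l` with digits `0 ≤ i, l < t` and `0 ≤ m ≤ 2s-2`, and the middle digit `m` is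
exactly what the two digits `j, q ∈ [0, s-1]` of the sumset can add up to.
-/

namespace Int

theorem exists_add_mul_iff {a b n : ℤ} (ha : 0 < a) :
    (∃ i m : ℤ, 0 ≤ i ∧ i < a ∧ 0 ≤ m ∧ m < b ∧ n = i + a * m) ↔ 0 ≤ n ∧ n < a * b := by
  constructor
  · rintro ⟨i, m, hi0, hia, hm0, hmb, rfl⟩
    have hmb' : a * m + a ≤ a * b := by
      rw [← mul_add_one]
      exact mul_le_mul_of_nonneg_left hmb ha.le
    exact ⟨by positivity, by linarith⟩
  · rintro ⟨hn0, hnab⟩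
    refine ⟨n % a, n / a, emod_nonneg n ha.ne', emod_lt_of_pos n ha, ediv_nonneg hn0 ha.le,
      (Int.ediv_lt_iff_lt_mul ha).mpr (by rwa [mul_comm b a]), (emod_add_mul_ediv n a).symm⟩

theorem exists_add_eq_iff {c d m : ℤ} (hc : 0 ≤ c) (hd : 0 ≤ d) :
    (∃ j q : ℤ, 0 ≤ j ∧ j ≤ c ∧ 0 ≤ q ∧ q ≤ d ∧ m = j + q) ↔ 0 ≤ m ∧ m ≤ c + d := by
  constructor
  · rintro ⟨j, q, hj0, hjc, hq0, hqd, rfl⟩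
    omega
  · rintro ⟨hm0, hmcd⟩
    exact ⟨min m c, m - min m c, by omega, by omega, by omega, by omega, by omega⟩

end Int

/-- The sumset of the PolyDot coded exponent sets equals the full interval
`{0, ..., t·θ' - 1}` with `θ' = t(2s-1)`, for `s, t ≥ 1`. -/
theorem stmt_0 (s t : ℤ) (hs : 1 ≤ s) (ht : 1 ≤ t) :
    {n : ℤ | ∃ i j q l : ℤ,
        0 ≤ i ∧ i ≤ t - 1 ∧ 0 ≤ j ∧ j ≤ s - 1 ∧
        0 ≤ q ∧ q ≤ s - 1 ∧ 0 ≤ l ∧ l ≤ t - 1 ∧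
        n = (i + t * j) + (t * q + (t * (2 * s - 1)) * l)} =
      {n : ℤ | 0 ≤ n ∧ n ≤ t * (t * (2 * s - 1)) - 1} := by
  have ht0 : 0 < t := by omega
  have hs0 : 0 < 2 * s - 1 := by omega
  have hsplit (m : ℤ) := Int.exists_add_eq_iff (m := m) (sub_nonneg.mpr hs) (sub_nonneg.mpr hs)
  have hmid (k : ℤ) := Int.exists_add_mul_iff (n := k) (b := t) hs0
  have hlow (n : ℤ) := Int.exists_add_mul_iff (n := n) (b := (2 * s - 1) * t) ht0
  ext n
  constructor
  · rintro ⟨i, j, q, l, hi0, hit, hj0, hjs, hq0, hqs, hl0, hlt, rfl⟩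
    obtain ⟨hm0, hms⟩ := (hsplit _).mp ⟨j, q, hj0, hjs, hq0, hqs, rfl⟩
    obtain ⟨hk0, hkst⟩ := (hmid _).mp ⟨j + q, l, hm0, by omega, hl0, by omega, rfl⟩
    obtain ⟨hn0, hnt⟩ := (hlow _).mp ⟨i, _, hi0, by omega, hk0, hkst, rfl⟩
    exact ⟨by linarith, by linarith⟩
  · rintro ⟨hn0, hnt⟩
    obtain ⟨i, k, hi0, hit, hk0, hkst, rfl⟩ := (hlow _).mpr ⟨hn0, by linarith⟩
    obtain ⟨m, l, hm0, hms, hl0, hlt, rfl⟩ := (hmid _).mpr ⟨hk0, hkst⟩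
    obtain ⟨j, q, hj0, hjs, hq0, hqs, rfl⟩ := (hsplit _).mpr ⟨hm0, by omega⟩
    exact ⟨i, j, q, l, hi0, by omega, hj0, hjs, hq0, hqs, hl0, by omega, by ring⟩
end

section
/- For integers s, t ≥ 2, let θ' = t(2s-1). Define V₁ = {î - w + θ'·l̂ : -t ≤ î ≤ -1, 1 ≤ l̂ ≤ t-1, 0 ≤ w ≤ θ'-ts-1} and, for p with 0 ≤ p ≤ t-1 and z ≥ 1, V₂ = {î - u + θ'·l̃ : -t ≤ î ≤ -1, 1 ≤ l̃ ≤ t-1-p, 0 ≤ u ≤ z-1-p(θ'-ts)} where p = min(⌊(z-1)/(θ'-ts)⌋, t-1) and z > θ'-ts. Then V₂ ⊆ V₁. -/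
/-! When the cap `t - 1` in `p = min ⌊(z-1)/D⌋ (t-1)` is active, the range of `l̃` is empty; otherwise
`p = ⌊(z-1)/D⌋` and the bound on `u` is `(z-1) mod D ≤ D - 1`, which is the bound on `w`
(here `D = θ' - ts = t(s-1) > 0`). -/

theorem Int.sub_min_ediv_mul_lt {a D m : ℤ} (hD : 0 < D) (hm : min (a / D) m < m) :
    a - min (a / D) m * D < D := by
  rw [min_eq_left (min_lt_iff.mp hm |>.resolve_right (lt_irrefl m)).le, mul_comm,
    ← Int.emod_def]
  exact Int.emod_lt_of_pos a hD

theorem Int.min_ediv_nonneg {a D m : ℤ} (ha : 0 ≤ a) (hD : 0 ≤ D) (hm : 0 ≤ m) :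
    0 ≤ min (a / D) m :=
  le_min (Int.ediv_nonneg ha hD) hm

theorem stmt_3_general (s t z : ℤ) (hs : 2 ≤ s) (ht : 2 ≤ t) (hz : 1 ≤ z) :
    {n : ℤ | ∃ i u l : ℤ,
        -t ≤ i ∧ i ≤ -1 ∧
        1 ≤ l ∧ l ≤ t - 1 - min ((z - 1) / (t * (2 * s - 1) - t * s)) (t - 1) ∧
        0 ≤ u ∧
        u ≤ z - 1 - (min ((z - 1) / (t * (2 * s - 1) - t * s)) (t - 1)) *
              (t * (2 * s - 1) - t * s) ∧
        n = i - u + (t * (2 * s - 1)) * l} ⊆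
      {n : ℤ | ∃ i w l : ℤ,
        -t ≤ i ∧ i ≤ -1 ∧ 1 ≤ l ∧ l ≤ t - 1 ∧
        0 ≤ w ∧ w ≤ t * (2 * s - 1) - t * s - 1 ∧
        n = i - w + (t * (2 * s - 1)) * l} := by
  rintro n ⟨i, u, l, hi₁, hi₂, hl₁, hl₂, hu₁, hu₂, rfl⟩
  set D := t * (2 * s - 1) - t * s
  have hD : 0 < D := by nlinarith
  have hp : 0 ≤ min ((z - 1) / D) (t - 1) := Int.min_ediv_nonneg (by omega) hD.le (by omega)
  have hu : z - 1 - min ((z - 1) / D) (t - 1) * D < D := Int.sub_min_ediv_mul_lt hD (by omega)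
  exact ⟨i, u, l, hi₁, hi₂, hl₁, by omega, hu₁, by omega, rfl⟩

/-- `V₂ ⊆ V₁`: one family of forbidden exponent values for `S_B(x)` in PolyDot-CMPC
is contained in the other, where `θ' = t(2s-1)` and
`p = min(⌊(z-1)/(θ'-ts)⌋, t-1)`, assuming `z > θ'-ts`. -/
theorem stmt_3 (s t z : ℤ) (hs : 2 ≤ s) (ht : 2 ≤ t) (hz : 1 ≤ z)
    (hzl : t * (2 * s - 1) - t * s < z) :
    {n : ℤ | ∃ i u l : ℤ,
        -t ≤ i ∧ i ≤ -1 ∧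
        1 ≤ l ∧ l ≤ t - 1 - min ((z - 1) / (t * (2 * s - 1) - t * s)) (t - 1) ∧
        0 ≤ u ∧
        u ≤ z - 1 - (min ((z - 1) / (t * (2 * s - 1) - t * s)) (t - 1)) *
              (t * (2 * s - 1) - t * s) ∧
        n = i - u + (t * (2 * s - 1)) * l} ⊆
      {n : ℤ | ∃ i w l : ℤ,
        -t ≤ i ∧ i ≤ -1 ∧ 1 ≤ l ∧ l ≤ t - 1 ∧
        0 ≤ w ∧ w ≤ t * (2 * s - 1) - t * s - 1 ∧
        n = i - w + (t * (2 * s - 1)) * l} :=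
  stmt_3_general s t z hs ht hz
end

section
/- For integers s, t ≥ 2, let θ' = t(2s-1) and suppose z is an integer with z > ts. Let p = min(⌊(z-1)/(θ'-ts)⌋, t-1). Then the union {0, ..., t·θ' + t + z - 2} ∪ {2ts + (t-1)·θ', ..., (p+2)·ts + θ'·(t-1) + 2z - 2} equals the interval {0, ..., (p+2)·ts + θ'·(t-1) + 2z - 2}. -/
theorem Set.Icc_union_Icc_of_le {α : Type*} [LinearOrder α] {a b c d : α}
    (hac : a ≤ c) (hcb : c ≤ b) (hbd : b ≤ d) : Icc a b ∪ Icc c d = Icc a d := by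
  rw [Icc_union_Icc' hcb (hac.trans (hcb.trans hbd)), min_eq_left hac, max_eq_right hbd]

/-- For `s, t ≥ 2`, `z > ts`, `θ' = t(2s-1)` and `p = min(⌊(z-1)/(θ'-ts)⌋, t-1)`,
the union `D₁ ∪ D₂ ∪ D₄` is the full interval `{0, ..., (p+2)ts + θ'(t-1) + 2z - 2}`. -/
theorem stmt_5 (s t z : ℤ) (hs : 2 ≤ s) (ht : 2 ≤ t) (hz : t * s < z) :
    Set.Icc (0 : ℤ) (t * (t * (2 * s - 1)) + t + z - 2) ∪
      Set.Icc (2 * (t * s) + (t - 1) * (t * (2 * s - 1)))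
        ((min ((z - 1) / (t * (2 * s - 1) - t * s)) (t - 1) + 2) * (t * s) +
          (t * (2 * s - 1)) * (t - 1) + 2 * z - 2) =
    Set.Icc (0 : ℤ)
      ((min ((z - 1) / (t * (2 * s - 1) - t * s)) (t - 1) + 2) * (t * s) +
        (t * (2 * s - 1)) * (t - 1) + 2 * z - 2) := by
  set p := min ((z - 1) / (t * (2 * s - 1) - t * s)) (t - 1)
  have hts : 0 < t * s := by positivity
  have hp : 0 ≤ p :=
    le_min (Int.ediv_nonneg (by omega) (by nlinarith)) (by omega)
  -- The gap between the two upper endpoints is `p * (t * s) + z`, between the two interior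
  -- endpoints `z - 2`.
  apply Set.Icc_union_Icc_of_le
  · have hθ : 0 < t * (2 * s - 1) := by nlinarith
    nlinarith [mul_nonneg (by omega : (0 : ℤ) ≤ t - 1) hθ.le]
  · nlinarith
  · nlinarith [mul_nonneg hp hts.le]
end

section
/- For integers t ≥ 2 and z ≥ 1 with z < t and s = 1, we have (t² + 2t + tz - 1) - (2t² + 2z - 1) = (2-t)(t-z), which is negative when t ≥ 3; hence for s = 1, t ≥ 3, z < t, PolyDot-CMPC requires strictly fewer workers than GCSA-NA. -/
theorem stmt_16_general (t z : ℤ) (hzt : z < t) :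
    (t ^ 2 + 2 * t + t * z - 1) - (2 * t ^ 2 + 2 * z - 1) = (2 - t) * (t - z) ∧
      (3 ≤ t → t ^ 2 + 2 * t + t * z - 1 < 2 * t ^ 2 + 2 * z - 1) := by
  have hdiff : (t ^ 2 + 2 * t + t * z - 1) - (2 * t ^ 2 + 2 * z - 1) = (2 - t) * (t - z) := by
    ring
  refine ⟨hdiff, fun ht => ?_⟩
  have hneg : (2 - t) * (t - z) < 0 := mul_neg_of_neg_of_pos (by linarith) (by linarith)
  linarith

/-- For `t ≥ 2`, `1 ≤ z < t` (and `s = 1`):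
`(t² + 2t + tz - 1) - (2t² + 2z - 1) = (2-t)(t-z)`, and if moreover `t ≥ 3`
then PolyDot-CMPC requires strictly fewer workers than GCSA-NA. -/
theorem stmt_16 (t z : ℤ) (ht : 2 ≤ t) (hz : 1 ≤ z) (hzt : z < t) :
    (t ^ 2 + 2 * t + t * z - 1) - (2 * t ^ 2 + 2 * z - 1) = (2 - t) * (t - z) ∧
      (3 ≤ t → t ^ 2 + 2 * t + t * z - 1 < 2 * t ^ 2 + 2 * z - 1) :=
  stmt_16_general t z hzt
end
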